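/- Let ξ be the unique root in (0,1) of x = φ³ + 2φ²x². For 1-fragility of golden games the conditional non-fragility probabilities converge as follows: lim_{n→∞} α_{2n}(1) = ξ, lim_{n→∞} α_{2n+1}(1) = ξ², lim_{n→∞} β_{2n+1}(1) = ξ, and lim_{n→∞} β_{2n}(1) = ξ². -/

import Mathlib

open Filter Topology

/-- The golden ratio `φ = (√5 − 1)/2`. -/
noncomputable def phi : ℝ := (Real.sqrt 5 - 1) / 2

/-- Backward-induction value of the win-lose game of depth `n` on the complete binary tree:
`V_0(a) = a 0`; for `n ≥ 1`, the value is the `AND` of the values of the two depth-`(n−1)`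
subtrees if `n` is odd (Player 2, the minimizer, moves) and the `OR` if `n` is even
(Player 1, the maximizer, moves).  Player 2 moves last. -/
def gameValue : (n : ℕ) → (Fin (2 ^ n) → Bool) → Bool
  | 0, a => a 0
  | n + 1, a =>
      have h : 2 ^ (n + 1) = 2 ^ n + 2 ^ n := by rw [pow_succ]; omega
      let aL : Fin (2 ^ n) → Bool := fun i => a ⟨i.1, by have := i.2; omega⟩
      let aR : Fin (2 ^ n) → Bool := fun i => a ⟨i.1 + 2 ^ n, by have := i.2; omega⟩
      if (n + 1) % 2 = 1 then gameValue n aL && gameValue n aR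
      else gameValue n aL || gameValue n aR

/-- `μ_{n,p}(S)`: the probability of a set `S` of depth-`n` games when the `2^n` payoffs are
i.i.d. Bernoulli, each `true` with probability `p`. -/
noncomputable def prob (n : ℕ) (p : ℝ) (S : Set (Fin (2 ^ n) → Bool)) : ℝ :=
  ∑ a : Fin (2 ^ n) → Bool, S.indicator (fun a => ∏ i, if a i then p else 1 - p) a

/-- A game `a` of depth `n` is `d`-fragile if there is a game `a'` at Hamming distance at most
`d` from `a` whose value differs from that of `a`. -/
def Fragile (n d : ℕ) (a : Fin (2 ^ n) → Bool) : Prop :=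
  ∃ a' : Fin (2 ^ n) → Bool, hammingDist a a' ≤ d ∧ gameValue n a' ≠ gameValue n a

/-- `F_n(d,p)`: the probability that a depth-`n` random game with parameter `p` is `d`-fragile. -/
noncomputable def fragProb (n d : ℕ) (p : ℝ) : ℝ := prob n p {a | Fragile n d a}

/-- `α_n(d)`: conditional probability that a golden game of depth `n` is not `d`-fragile,
given that Player 1 wins it. -/
noncomputable def alpha (n d : ℕ) : ℝ :=
  prob n phi {a | ¬ Fragile n d a ∧ gameValue n a = true} /
    prob n phi {a | gameValue n a = true}

/-- `β_n(d)`: conditional probability that a golden game of depth `n` is not `d`-fragile,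
given that Player 2 wins it. -/
noncomputable def beta (n d : ℕ) : ℝ :=
  prob n phi {a | ¬ Fragile n d a ∧ gameValue n a = false} /
    prob n phi {a | gameValue n a = false}

section Aux
open Finset

lemma lt_pow_succ {n k : ℕ} (h : k < 2 ^ n) : k < 2 ^ (n+1) := by rw [pow_succ]; omega
lemma add_lt_pow_succ {n k : ℕ} (h : k < 2 ^ n) : k + 2 ^ n < 2 ^ (n+1) := by rw [pow_succ]; omega
lemma sub_lt_pow {n k : ℕ} (h1 : k < 2 ^ (n+1)) (h2 : ¬ k < 2 ^ n) : k - 2 ^ n < 2 ^ n := by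
  rw [pow_succ] at h1; omega

def gleft {n : ℕ} (a : Fin (2 ^ (n+1)) → Bool) : Fin (2 ^ n) → Bool :=
  fun i => a ⟨i.1, lt_pow_succ i.2⟩
def gright {n : ℕ} (a : Fin (2 ^ (n+1)) → Bool) : Fin (2 ^ n) → Bool :=
  fun i => a ⟨i.1 + 2 ^ n, add_lt_pow_succ i.2⟩

lemma gameValue_succ (n : ℕ) (a : Fin (2 ^ (n+1)) → Bool) :
    gameValue (n+1) a = if (n + 1) % 2 = 1 then gameValue n (gleft a) && gameValue n (gright a)
      else gameValue n (gleft a) || gameValue n (gright a) := rfl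

def toSum (n : ℕ) : Fin (2 ^ (n+1)) ≃ (Fin (2 ^ n) ⊕ Fin (2 ^ n)) where
  toFun j := if h : j.1 < 2 ^ n then Sum.inl ⟨j.1, h⟩
    else Sum.inr ⟨j.1 - 2 ^ n, sub_lt_pow j.2 h⟩
  invFun x := Sum.elim
    (fun i => ⟨i.1, lt_pow_succ i.2⟩)
    (fun i => ⟨i.1 + 2 ^ n, add_lt_pow_succ i.2⟩) x
  left_inv j := by
    by_cases h : j.1 < 2 ^ n
    · simp [h]
    · simp [h]
      exact Fin.ext (by simp; omega)
  right_inv x := by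
    rcases x with i | i
    · simp
    · simp

def glue {n : ℕ} (b c : Fin (2 ^ n) → Bool) : Fin (2 ^ (n+1)) → Bool :=
  fun j => Sum.elim b c (toSum n j)

lemma gleft_glue {n : ℕ} (b c : Fin (2 ^ n) → Bool) : gleft (glue b c) = b := by
  funext i; simp [gleft, glue, toSum, i.2]
lemma gright_glue {n : ℕ} (b c : Fin (2 ^ n) → Bool) : gright (glue b c) = c := by
  funext i; simp [gright, glue, toSum]
lemma glue_eq {n : ℕ} (a : Fin (2 ^ (n+1)) → Bool) : glue (gleft a) (gright a) = a := by
  funext j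
  by_cases h : j.1 < 2 ^ n
  · simp [glue, toSum, h, gleft, gright]
  · simp [glue, toSum, h, gleft, gright]
    congr 1
    exact Fin.ext (by simp; omega)

lemma glue_symm_apply {n : ℕ} (b c : Fin (2 ^ n) → Bool) (x : Fin (2 ^ n) ⊕ Fin (2 ^ n)) :
    glue b c ((toSum n).symm x) = Sum.elim b c x := by
  simp [glue]

lemma hammingDist_glue {n : ℕ} (b c b' c' : Fin (2 ^ n) → Bool) :
    hammingDist (glue b c) (glue b' c') = hammingDist b b' + hammingDist c c' := by
  rw [hammingDist, hammingDist, hammingDist, Finset.card_filter, Finset.card_filter,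
    Finset.card_filter, ← Equiv.sum_comp (toSum n).symm
      (fun j => if glue b c j ≠ glue b' c' j then 1 else 0), Fintype.sum_sum_type]
  simp only [glue_symm_apply]
  simp
  congr 1 <;> refine Finset.sum_congr rfl fun x _ => ?_ <;> split_ifs <;> simp_all

lemma hammingDist_split {n : ℕ} (a a' : Fin (2 ^ (n+1)) → Bool) :
    hammingDist a a' = hammingDist (gleft a) (gleft a') + hammingDist (gright a) (gright a') := by
  have h := hammingDist_glue (gleft a) (gright a) (gleft a') (gright a')
  rwa [glue_eq, glue_eq] at h

lemma gv_and {n : ℕ} (hn : (n + 1) % 2 = 1) (a : Fin (2 ^ (n+1)) → Bool) :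
    gameValue (n+1) a = (gameValue n (gleft a) && gameValue n (gright a)) := by
  rw [gameValue_succ, if_pos hn]

lemma gv_or {n : ℕ} (hn : ¬ (n + 1) % 2 = 1) (a : Fin (2 ^ (n+1)) → Bool) :
    gameValue (n+1) a = (gameValue n (gleft a) || gameValue n (gright a)) := by
  rw [gameValue_succ, if_neg hn]

lemma fragile_succ_of_left {n : ℕ} {a : Fin (2 ^ (n+1)) → Bool} (b' : Fin (2 ^ n) → Bool)
    (hd : hammingDist (gleft a) b' ≤ 1)
    (hv : gameValue (n+1) (glue b' (gright a)) ≠ gameValue (n+1) a) : Fragile (n+1) 1 a := by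
  refine ⟨glue b' (gright a), ?_, hv⟩
  rw [hammingDist_split, gleft_glue, gright_glue, hammingDist_self]
  simpa using hd

lemma fragile_succ_of_right {n : ℕ} {a : Fin (2 ^ (n+1)) → Bool} (c' : Fin (2 ^ n) → Bool)
    (hd : hammingDist (gright a) c' ≤ 1)
    (hv : gameValue (n+1) (glue (gleft a) c') ≠ gameValue (n+1) a) : Fragile (n+1) 1 a := by
  refine ⟨glue (gleft a) c', ?_, hv⟩
  rw [hammingDist_split, gleft_glue, gright_glue, hammingDist_self]
  simpa using hd

lemma fragile_elim {n : ℕ} {a : Fin (2 ^ (n+1)) → Bool} (h : Fragile (n+1) 1 a) :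
    ∃ b' c' : Fin (2 ^ n) → Bool, hammingDist (gleft a) b' ≤ 1 ∧ hammingDist (gright a) c' ≤ 1 ∧
      (b' = gleft a ∨ c' = gright a) ∧ gameValue (n+1) (glue b' c') ≠ gameValue (n+1) a := by
  obtain ⟨a', hd, hv⟩ := h
  rw [hammingDist_split] at hd
  refine ⟨gleft a', gright a', by omega, by omega, ?_, by rwa [glue_eq]⟩
  have h0 : hammingDist (gleft a) (gleft a') = 0 ∨ hammingDist (gright a) (gright a') = 0 := by
    omega
  rcases h0 with h0 | h0
  · exact Or.inl (eq_of_hammingDist_eq_zero h0).symm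
  · exact Or.inr (eq_of_hammingDist_eq_zero h0).symm

section SetLemmas
variable {n : ℕ}

lemma valTrue_and (hn : (n + 1) % 2 = 1) :
    {a : Fin (2 ^ (n+1)) → Bool | gameValue (n+1) a = true}
      = {a | gleft a ∈ {b : Fin (2 ^ n) → Bool | gameValue n b = true}
          ∧ gright a ∈ {b | gameValue n b = true}} := by
  ext a
  simp only [Set.mem_setOf_eq, gv_and hn, Bool.and_eq_true]

lemma valFalse_or (hn : ¬ (n + 1) % 2 = 1) :
    {a : Fin (2 ^ (n+1)) → Bool | gameValue (n+1) a = false}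
      = {a | gleft a ∈ {b : Fin (2 ^ n) → Bool | gameValue n b = false}
          ∧ gright a ∈ {b | gameValue n b = false}} := by
  ext a
  simp only [Set.mem_setOf_eq, gv_or hn, Bool.or_eq_false_iff]

lemma valFalse_and (hn : (n + 1) % 2 = 1) :
    {a : Fin (2 ^ (n+1)) → Bool | gameValue (n+1) a = false}
      = {a | gleft a ∈ {b : Fin (2 ^ n) → Bool | gameValue n b = false}
          ∧ gright a ∈ {b | gameValue n b = true}}
      ∪ ({a | gleft a ∈ {b : Fin (2 ^ n) → Bool | gameValue n b = true}
          ∧ gright a ∈ {b | gameValue n b = false}}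
      ∪ {a | gleft a ∈ {b : Fin (2 ^ n) → Bool | gameValue n b = false}
          ∧ gright a ∈ {b | gameValue n b = false}}) := by
  ext a
  simp only [Set.mem_setOf_eq, Set.mem_union, gv_and hn]
  cases hL : gameValue n (gleft a) <;> cases hR : gameValue n (gright a) <;> simp

lemma valTrue_or (hn : ¬ (n + 1) % 2 = 1) :
    {a : Fin (2 ^ (n+1)) → Bool | gameValue (n+1) a = true}
      = {a | gleft a ∈ {b : Fin (2 ^ n) → Bool | gameValue n b = true}
          ∧ gright a ∈ {b | gameValue n b = false}}
      ∪ ({a | gleft a ∈ {b : Fin (2 ^ n) → Bool | gameValue n b = false}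
          ∧ gright a ∈ {b | gameValue n b = true}}
      ∪ {a | gleft a ∈ {b : Fin (2 ^ n) → Bool | gameValue n b = true}
          ∧ gright a ∈ {b | gameValue n b = true}}) := by
  ext a
  simp only [Set.mem_setOf_eq, Set.mem_union, gv_or hn]
  cases hL : gameValue n (gleft a) <;> cases hR : gameValue n (gright a) <;> simp

lemma notFragTrue_and (hn : (n + 1) % 2 = 1) :
    {a : Fin (2 ^ (n+1)) → Bool | ¬ Fragile (n+1) 1 a ∧ gameValue (n+1) a = true}
      = {a | gleft a ∈ {b : Fin (2 ^ n) → Bool | ¬ Fragile n 1 b ∧ gameValue n b = true}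
          ∧ gright a ∈ {b | ¬ Fragile n 1 b ∧ gameValue n b = true}} := by
  ext a
  simp only [Set.mem_setOf_eq]
  constructor
  · rintro ⟨hnf, hv⟩
    rw [gv_and hn, Bool.and_eq_true] at hv
    obtain ⟨hL, hR⟩ := hv
    refine ⟨⟨?_, hL⟩, ?_, hR⟩
    · rintro ⟨b', hd, hne⟩
      refine hnf (fragile_succ_of_left b' hd ?_)
      have hb : gameValue n b' = false := by
        rw [hL] at hne; simpa using hne
      rw [gv_and hn, gv_and hn, gleft_glue, gright_glue, hb, hL, hR]
      simp
    · rintro ⟨c', hd, hne⟩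
      refine hnf (fragile_succ_of_right c' hd ?_)
      have hc : gameValue n c' = false := by
        rw [hR] at hne; simpa using hne
      rw [gv_and hn, gv_and hn, gleft_glue, gright_glue, hc, hL, hR]
      simp
  · rintro ⟨⟨hnfL, hL⟩, hnfR, hR⟩
    have hv : gameValue (n+1) a = true := by rw [gv_and hn, hL, hR]; rfl
    refine ⟨fun hfrag => ?_, hv⟩
    obtain ⟨b', c', hdb, hdc, -, hne⟩ := fragile_elim hfrag
    rw [hv, gv_and hn, gleft_glue, gright_glue] at hne
    have h : gameValue n b' = false ∨ gameValue n c' = false := by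
      cases hb : gameValue n b' <;> cases hc : gameValue n c' <;> simp [hb, hc] at hne ⊢
    rcases h with h | h
    · exact hnfL ⟨b', hdb, by rw [h, hL]; simp⟩
    · exact hnfR ⟨c', hdc, by rw [h, hR]; simp⟩

lemma notFragFalse_or (hn : ¬ (n + 1) % 2 = 1) :
    {a : Fin (2 ^ (n+1)) → Bool | ¬ Fragile (n+1) 1 a ∧ gameValue (n+1) a = false}
      = {a | gleft a ∈ {b : Fin (2 ^ n) → Bool | ¬ Fragile n 1 b ∧ gameValue n b = false}
          ∧ gright a ∈ {b | ¬ Fragile n 1 b ∧ gameValue n b = false}} := by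
  ext a
  simp only [Set.mem_setOf_eq]
  constructor
  · rintro ⟨hnf, hv⟩
    rw [gv_or hn, Bool.or_eq_false_iff] at hv
    obtain ⟨hL, hR⟩ := hv
    refine ⟨⟨?_, hL⟩, ?_, hR⟩
    · rintro ⟨b', hd, hne⟩
      refine hnf (fragile_succ_of_left b' hd ?_)
      have hb : gameValue n b' = true := by
        rw [hL] at hne; simpa using hne
      rw [gv_or hn, gv_or hn, gleft_glue, gright_glue, hb, hL, hR]
      simp
    · rintro ⟨c', hd, hne⟩
      refine hnf (fragile_succ_of_right c' hd ?_)
      have hc : gameValue n c' = true := by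
        rw [hR] at hne; simpa using hne
      rw [gv_or hn, gv_or hn, gleft_glue, gright_glue, hc, hL, hR]
      simp
  · rintro ⟨⟨hnfL, hL⟩, hnfR, hR⟩
    have hv : gameValue (n+1) a = false := by rw [gv_or hn, hL, hR]; rfl
    refine ⟨fun hfrag => ?_, hv⟩
    obtain ⟨b', c', hdb, hdc, -, hne⟩ := fragile_elim hfrag
    rw [hv, gv_or hn, gleft_glue, gright_glue] at hne
    have h : gameValue n b' = true ∨ gameValue n c' = true := by
      cases hb : gameValue n b' <;> cases hc : gameValue n c' <;> simp [hb, hc] at hne ⊢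
    rcases h with h | h
    · exact hnfL ⟨b', hdb, by rw [h, hL]; simp⟩
    · exact hnfR ⟨c', hdc, by rw [h, hR]; simp⟩

lemma notFragFalse_and (hn : (n + 1) % 2 = 1) :
    {a : Fin (2 ^ (n+1)) → Bool | ¬ Fragile (n+1) 1 a ∧ gameValue (n+1) a = false}
      = {a | gleft a ∈ {b : Fin (2 ^ n) → Bool | ¬ Fragile n 1 b ∧ gameValue n b = false}
          ∧ gright a ∈ {b | gameValue n b = true}}
      ∪ ({a | gleft a ∈ {b : Fin (2 ^ n) → Bool | gameValue n b = true}
          ∧ gright a ∈ {b | ¬ Fragile n 1 b ∧ gameValue n b = false}}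
      ∪ {a | gleft a ∈ {b : Fin (2 ^ n) → Bool | gameValue n b = false}
          ∧ gright a ∈ {b | gameValue n b = false}}) := by
  ext a
  simp only [Set.mem_setOf_eq, Set.mem_union]
  constructor
  · rintro ⟨hnf, hv⟩
    rw [gv_and hn] at hv
    cases hL : gameValue n (gleft a) <;> cases hR : gameValue n (gright a)
    · exact Or.inr (Or.inr ⟨rfl, rfl⟩)
    · refine Or.inl ⟨⟨fun hfl => ?_, rfl⟩, rfl⟩
      obtain ⟨b', hd, hne⟩ := hfl
      refine hnf (fragile_succ_of_left b' hd ?_)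
      have hb : gameValue n b' = true := by rw [hL] at hne; simpa using hne
      rw [gv_and hn, gv_and hn, gleft_glue, gright_glue, hb, hL, hR]
      simp
    · refine Or.inr (Or.inl ⟨rfl, ⟨fun hfr => ?_, rfl⟩⟩)
      obtain ⟨c', hd, hne⟩ := hfr
      refine hnf (fragile_succ_of_right c' hd ?_)
      have hc : gameValue n c' = true := by rw [hR] at hne; simpa using hne
      rw [gv_and hn, gv_and hn, gleft_glue, gright_glue, hc, hL, hR]
      simp
    · rw [hL, hR] at hv; simp at hv
  · have hfr : ∀ (hv : gameValue (n+1) a = false), Fragile (n+1) 1 a →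
        ∃ b' c' : Fin (2 ^ n) → Bool, hammingDist (gleft a) b' ≤ 1 ∧
          hammingDist (gright a) c' ≤ 1 ∧ (b' = gleft a ∨ c' = gright a) ∧
          gameValue n b' = true ∧ gameValue n c' = true := by
      intro hv hfrag
      obtain ⟨b', c', hdb, hdc, hor, hne⟩ := fragile_elim hfrag
      rw [hv, gv_and hn, gleft_glue, gright_glue] at hne
      have h : gameValue n b' = true ∧ gameValue n c' = true := by
        cases hb : gameValue n b' <;> cases hc : gameValue n c' <;> simp [hb, hc] at hne ⊢
      exact ⟨b', c', hdb, hdc, hor, h⟩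
    rintro (⟨⟨hnfL, hL⟩, hR⟩ | ⟨hL, hnfR, hR⟩ | ⟨hL, hR⟩)
    · have hv : gameValue (n+1) a = false := by rw [gv_and hn, hL]; rfl
      refine ⟨fun hfrag => ?_, hv⟩
      obtain ⟨b', c', hdb, hdc, -, hb, -⟩ := hfr hv hfrag
      exact hnfL ⟨b', hdb, by rw [hb, hL]; simp⟩
    · have hv : gameValue (n+1) a = false := by rw [gv_and hn, hR]; simp
      refine ⟨fun hfrag => ?_, hv⟩
      obtain ⟨b', c', hdb, hdc, -, -, hc⟩ := hfr hv hfrag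
      exact hnfR ⟨c', hdc, by rw [hc, hR]; simp⟩
    · have hv : gameValue (n+1) a = false := by rw [gv_and hn, hL]; rfl
      refine ⟨fun hfrag => ?_, hv⟩
      obtain ⟨b', c', hdb, hdc, hor, hb, hc⟩ := hfr hv hfrag
      rcases hor with h | h
      · rw [h, hL] at hb; exact Bool.false_ne_true hb
      · rw [h, hR] at hc; exact Bool.false_ne_true hc

lemma notFragTrue_or (hn : ¬ (n + 1) % 2 = 1) :
    {a : Fin (2 ^ (n+1)) → Bool | ¬ Fragile (n+1) 1 a ∧ gameValue (n+1) a = true}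
      = {a | gleft a ∈ {b : Fin (2 ^ n) → Bool | ¬ Fragile n 1 b ∧ gameValue n b = true}
          ∧ gright a ∈ {b | gameValue n b = false}}
      ∪ ({a | gleft a ∈ {b : Fin (2 ^ n) → Bool | gameValue n b = false}
          ∧ gright a ∈ {b | ¬ Fragile n 1 b ∧ gameValue n b = true}}
      ∪ {a | gleft a ∈ {b : Fin (2 ^ n) → Bool | gameValue n b = true}
          ∧ gright a ∈ {b | gameValue n b = true}}) := by
  ext a
  simp only [Set.mem_setOf_eq, Set.mem_union]
  constructor
  · rintro ⟨hnf, hv⟩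
    rw [gv_or hn] at hv
    cases hL : gameValue n (gleft a) <;> cases hR : gameValue n (gright a)
    · rw [hL, hR] at hv; simp at hv
    · refine Or.inr (Or.inl ⟨rfl, ⟨fun hfr => ?_, rfl⟩⟩)
      obtain ⟨c', hd, hne⟩ := hfr
      refine hnf (fragile_succ_of_right c' hd ?_)
      have hc : gameValue n c' = false := by rw [hR] at hne; simpa using hne
      rw [gv_or hn, gv_or hn, gleft_glue, gright_glue, hc, hL, hR]
      simp
    · refine Or.inl ⟨⟨fun hfl => ?_, rfl⟩, rfl⟩
      obtain ⟨b', hd, hne⟩ := hfl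
      refine hnf (fragile_succ_of_left b' hd ?_)
      have hb : gameValue n b' = false := by rw [hL] at hne; simpa using hne
      rw [gv_or hn, gv_or hn, gleft_glue, gright_glue, hb, hL, hR]
      simp
    · exact Or.inr (Or.inr ⟨rfl, rfl⟩)
  · have hfr : ∀ (hv : gameValue (n+1) a = true), Fragile (n+1) 1 a →
        ∃ b' c' : Fin (2 ^ n) → Bool, hammingDist (gleft a) b' ≤ 1 ∧
          hammingDist (gright a) c' ≤ 1 ∧ (b' = gleft a ∨ c' = gright a) ∧
          gameValue n b' = false ∧ gameValue n c' = false := by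
      intro hv hfrag
      obtain ⟨b', c', hdb, hdc, hor, hne⟩ := fragile_elim hfrag
      rw [hv, gv_or hn, gleft_glue, gright_glue] at hne
      have h : gameValue n b' = false ∧ gameValue n c' = false := by
        cases hb : gameValue n b' <;> cases hc : gameValue n c' <;> simp [hb, hc] at hne ⊢
      exact ⟨b', c', hdb, hdc, hor, h⟩
    rintro (⟨⟨hnfL, hL⟩, hR⟩ | ⟨hL, hnfR, hR⟩ | ⟨hL, hR⟩)
    · have hv : gameValue (n+1) a = true := by rw [gv_or hn, hL]; rfl
      refine ⟨fun hfrag => ?_, hv⟩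
      obtain ⟨b', c', hdb, hdc, -, hb, -⟩ := hfr hv hfrag
      exact hnfL ⟨b', hdb, by rw [hb, hL]; simp⟩
    · have hv : gameValue (n+1) a = true := by rw [gv_or hn, hR]; simp
      refine ⟨fun hfrag => ?_, hv⟩
      obtain ⟨b', c', hdb, hdc, -, -, hc⟩ := hfr hv hfrag
      exact hnfR ⟨c', hdc, by rw [hc, hR]; simp⟩
    · have hv : gameValue (n+1) a = true := by rw [gv_or hn, hL]; rfl
      refine ⟨fun hfrag => ?_, hv⟩
      obtain ⟨b', c', hdb, hdc, hor, hb, hc⟩ := hfr hv hfrag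
      rcases hor with h | h
      · rw [h, hL] at hb; exact Bool.false_ne_true hb.symm
      · rw [h, hR] at hc; exact Bool.false_ne_true hc.symm

end SetLemmas

def pairEquiv (n : ℕ) : ((Fin (2 ^ n) → Bool) × (Fin (2 ^ n) → Bool)) ≃ (Fin (2 ^ (n+1)) → Bool) where
  toFun x := glue x.1 x.2
  invFun a := (gleft a, gright a)
  left_inv x := by simp [gleft_glue, gright_glue]
  right_inv a := glue_eq a

lemma weight_glue {n : ℕ} (p : ℝ) (b c : Fin (2 ^ n) → Bool) :
    (∏ i, if glue b c i then p else 1 - p)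
      = (∏ i, if b i then p else 1 - p) * (∏ i, if c i then p else 1 - p) := by
  rw [← Equiv.prod_comp (toSum n).symm (fun j => if glue b c j then p else 1 - p),
    Fintype.prod_sum_type]
  simp only [glue_symm_apply, Sum.elim_inl, Sum.elim_inr]

lemma prob_succ_prod {n : ℕ} (p : ℝ) (S T : Set (Fin (2 ^ n) → Bool)) :
    prob (n+1) p {a | gleft a ∈ S ∧ gright a ∈ T} = prob n p S * prob n p T := by
  classical
  rw [prob, ← Equiv.sum_comp (pairEquiv n)
    (fun a => ({a | gleft a ∈ S ∧ gright a ∈ T} : Set _).indicator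
      (fun a => ∏ i, if a i then p else 1 - p) a), Fintype.sum_prod_type]
  rw [prob, prob, Finset.sum_mul_sum]
  refine Finset.sum_congr rfl fun b _ => Finset.sum_congr rfl fun c _ => ?_
  simp only [pairEquiv, Equiv.coe_fn_mk, Set.indicator_apply, Set.mem_setOf_eq,
    gleft_glue, gright_glue, weight_glue]
  by_cases hb : b ∈ S <;> by_cases hc : c ∈ T <;> simp [hb, hc]

lemma prob_union {n : ℕ} (p : ℝ) {S T : Set (Fin (2 ^ n) → Bool)} (h : Disjoint S T) :
    prob n p (S ∪ T) = prob n p S + prob n p T := by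
  rw [prob, prob, prob, ← Finset.sum_add_distrib]
  exact Finset.sum_congr rfl fun a _ => by rw [Set.indicator_union_of_disjoint h]

lemma disjoint_prod_left {n : ℕ} {S T S' T' : Set (Fin (2 ^ n) → Bool)}
    (hS : ∀ b ∈ S, gameValue n b = true) (hS' : ∀ b ∈ S', gameValue n b = false) :
    Disjoint {a : Fin (2 ^ (n+1)) → Bool | gleft a ∈ S ∧ gright a ∈ T}
      {a | gleft a ∈ S' ∧ gright a ∈ T'} := by
  rw [Set.disjoint_left]
  rintro a ⟨h1, -⟩ ⟨h2, -⟩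
  have e1 := hS _ h1
  have e2 := hS' _ h2
  rw [e1] at e2
  exact Bool.false_ne_true e2.symm

lemma disjoint_prod_right {n : ℕ} {S T S' T' : Set (Fin (2 ^ n) → Bool)}
    (hT : ∀ b ∈ T, gameValue n b = true) (hT' : ∀ b ∈ T', gameValue n b = false) :
    Disjoint {a : Fin (2 ^ (n+1)) → Bool | gleft a ∈ S ∧ gright a ∈ T}
      {a | gleft a ∈ S' ∧ gright a ∈ T'} := by
  rw [Set.disjoint_left]
  rintro a ⟨-, h1⟩ ⟨-, h2⟩
  have e1 := hT _ h1
  have e2 := hT' _ h2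
  rw [e1] at e2
  exact Bool.false_ne_true e2.symm

def boolEquiv : Bool ≃ (Fin (2 ^ 0) → Bool) where
  toFun b := fun _ => b
  invFun a := a ⟨0, by norm_num⟩
  left_inv b := rfl
  right_inv a := by
    funext i
    have h2 : i.1 < 1 := by have := i.2; norm_num at this; omega
    have h3 : i = ⟨0, by norm_num⟩ := Fin.ext (by simp)
    rw [h3]

lemma prob_zero (p : ℝ) (S : Set (Fin (2 ^ 0) → Bool)) :
    prob 0 p S = S.indicator (fun _ => p) (fun _ => true)
      + S.indicator (fun _ => 1 - p) (fun _ => false) := by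
  rw [prob, ← Equiv.sum_comp boolEquiv
    (fun a => S.indicator (fun a => ∏ i, if a i then p else 1 - p) a), Fintype.sum_bool]
  simp only [boolEquiv, Equiv.coe_fn_mk]
  have hprod : ∀ q : ℝ, (∏ _i : Fin (2 ^ 0), q) = q := by
    intro q
    rw [Finset.prod_const]
    norm_num
  congr 1
  · by_cases h : (fun _ => true) ∈ S
    · rw [Set.indicator_of_mem h, Set.indicator_of_mem h]
      simpa using hprod p
    · rw [Set.indicator_of_notMem h, Set.indicator_of_notMem h]
  · by_cases h : (fun _ => false) ∈ S
    · rw [Set.indicator_of_mem h, Set.indicator_of_mem h]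
      simpa using hprod (1 - p)
    · rw [Set.indicator_of_notMem h, Set.indicator_of_notMem h]

lemma fragile_zero (a : Fin (2 ^ 0) → Bool) : Fragile 0 1 a := by
  refine ⟨fun i => !a i, ?_, ?_⟩
  · have h := hammingDist_le_card_fintype (x := a) (y := fun i => !a i)
    simpa using h
  · show (!a 0) ≠ a 0
    simp

lemma prob_empty (n : ℕ) (p : ℝ) : prob n p (∅ : Set (Fin (2 ^ n) → Bool)) = 0 := by
  simp [prob]

noncomputable def Pt (n : ℕ) : ℝ := prob n phi {b : Fin (2 ^ n) → Bool | gameValue n b = true}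
noncomputable def Pf (n : ℕ) : ℝ := prob n phi {b : Fin (2 ^ n) → Bool | gameValue n b = false}
noncomputable def At (n : ℕ) : ℝ :=
  prob n phi {b : Fin (2 ^ n) → Bool | ¬ Fragile n 1 b ∧ gameValue n b = true}
noncomputable def Bf (n : ℕ) : ℝ :=
  prob n phi {b : Fin (2 ^ n) → Bool | ¬ Fragile n 1 b ∧ gameValue n b = false}

lemma sqrt5_sq : Real.sqrt 5 ^ 2 = 5 := Real.sq_sqrt (by norm_num)
lemma phi_sq : phi ^ 2 = 1 - phi := by unfold phi; linear_combination (1/4) * sqrt5_sq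
lemma phi_pos : 0 < phi := by
  unfold phi; nlinarith [sqrt5_sq, Real.sqrt_nonneg 5]
lemma phi_lt : phi < 3 / 4 := by
  unfold phi; nlinarith [sqrt5_sq, Real.sqrt_nonneg 5]

lemma Pt_zero : Pt 0 = phi := by
  have h1 : (fun _ => true) ∈ {b : Fin (2 ^ 0) → Bool | gameValue 0 b = true} := rfl
  have h2 : (fun _ => false) ∉ {b : Fin (2 ^ 0) → Bool | gameValue 0 b = true} := by
    intro h
    exact Bool.false_ne_true h
  rw [Pt, prob_zero, Set.indicator_of_mem h1, Set.indicator_of_notMem h2, add_zero]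

lemma Pf_zero : Pf 0 = 1 - phi := by
  have h1 : (fun _ => true) ∉ {b : Fin (2 ^ 0) → Bool | gameValue 0 b = false} := by
    intro h
    exact Bool.false_ne_true (h : (true : Bool) = false).symm
  have h2 : (fun _ => false) ∈ {b : Fin (2 ^ 0) → Bool | gameValue 0 b = false} := rfl
  rw [Pf, prob_zero, Set.indicator_of_notMem h1, Set.indicator_of_mem h2, zero_add]

lemma At_zero : At 0 = 0 := by
  have h : {b : Fin (2 ^ 0) → Bool | ¬ Fragile 0 1 b ∧ gameValue 0 b = true} = ∅ := by
    ext b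
    simp [fragile_zero b]
  rw [At, h, prob_empty]

lemma Bf_zero : Bf 0 = 0 := by
  have h : {b : Fin (2 ^ 0) → Bool | ¬ Fragile 0 1 b ∧ gameValue 0 b = false} = ∅ := by
    ext b
    simp [fragile_zero b]
  rw [Bf, h, prob_empty]

section Recursions
variable {n : ℕ}

lemma Pt_succ_and (hn : (n + 1) % 2 = 1) : Pt (n+1) = Pt n * Pt n := by
  rw [Pt, valTrue_and hn, prob_succ_prod]; rfl

lemma At_succ_and (hn : (n + 1) % 2 = 1) : At (n+1) = At n * At n := by
  rw [At, notFragTrue_and hn, prob_succ_prod]; rfl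

lemma Pf_succ_or (hn : ¬ (n + 1) % 2 = 1) : Pf (n+1) = Pf n * Pf n := by
  rw [Pf, valFalse_or hn, prob_succ_prod]; rfl

lemma Bf_succ_or (hn : ¬ (n + 1) % 2 = 1) : Bf (n+1) = Bf n * Bf n := by
  rw [Bf, notFragFalse_or hn, prob_succ_prod]; rfl

lemma Pf_succ_and (hn : (n + 1) % 2 = 1) :
    Pf (n+1) = Pf n * Pt n + (Pt n * Pf n + Pf n * Pf n) := by
  rw [Pf, valFalse_and hn,
    prob_union phi (Set.disjoint_union_right.mpr
      ⟨disjoint_prod_right (T := {b : Fin (2 ^ n) → Bool | gameValue n b = true}) (T' := {b : Fin (2 ^ n) → Bool | gameValue n b = false}) (fun b hb => hb) (fun b hb => hb),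
       disjoint_prod_right (T := {b : Fin (2 ^ n) → Bool | gameValue n b = true}) (T' := {b : Fin (2 ^ n) → Bool | gameValue n b = false}) (fun b hb => hb) (fun b hb => hb)⟩),
    prob_union phi (disjoint_prod_left (S := {b : Fin (2 ^ n) → Bool | gameValue n b = true}) (S' := {b : Fin (2 ^ n) → Bool | gameValue n b = false}) (fun b hb => hb) (fun b hb => hb)),
    prob_succ_prod, prob_succ_prod, prob_succ_prod]
  rfl

lemma Bf_succ_and (hn : (n + 1) % 2 = 1) :
    Bf (n+1) = Bf n * Pt n + (Pt n * Bf n + Pf n * Pf n) := by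
  rw [Bf, notFragFalse_and hn,
    prob_union phi (Set.disjoint_union_right.mpr
      ⟨disjoint_prod_right (T := {b : Fin (2 ^ n) → Bool | gameValue n b = true}) (T' := {b : Fin (2 ^ n) → Bool | ¬ Fragile n 1 b ∧ gameValue n b = false}) (fun b hb => hb) (fun b hb => hb.2),
       disjoint_prod_right (T := {b : Fin (2 ^ n) → Bool | gameValue n b = true}) (T' := {b : Fin (2 ^ n) → Bool | gameValue n b = false}) (fun b hb => hb) (fun b hb => hb)⟩),
    prob_union phi (disjoint_prod_left (S := {b : Fin (2 ^ n) → Bool | gameValue n b = true}) (S' := {b : Fin (2 ^ n) → Bool | gameValue n b = false}) (fun b hb => hb) (fun b hb => hb)),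
    prob_succ_prod, prob_succ_prod, prob_succ_prod]
  rfl

lemma Pt_succ_or (hn : ¬ (n + 1) % 2 = 1) :
    Pt (n+1) = Pt n * Pf n + (Pf n * Pt n + Pt n * Pt n) := by
  rw [Pt, valTrue_or hn,
    prob_union phi (Set.disjoint_union_right.mpr
      ⟨disjoint_prod_left (S := {b : Fin (2 ^ n) → Bool | gameValue n b = true}) (S' := {b : Fin (2 ^ n) → Bool | gameValue n b = false}) (fun b hb => hb) (fun b hb => hb),
       (disjoint_prod_right (T := {b : Fin (2 ^ n) → Bool | gameValue n b = true}) (T' := {b : Fin (2 ^ n) → Bool | gameValue n b = false}) (fun b hb => hb) (fun b hb => hb)).symm⟩),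
    prob_union phi (disjoint_prod_left (S := {b : Fin (2 ^ n) → Bool | gameValue n b = true}) (S' := {b : Fin (2 ^ n) → Bool | gameValue n b = false}) (fun b hb => hb) (fun b hb => hb)).symm,
    prob_succ_prod, prob_succ_prod, prob_succ_prod]
  rfl

lemma At_succ_or (hn : ¬ (n + 1) % 2 = 1) :
    At (n+1) = At n * Pf n + (Pf n * At n + Pt n * Pt n) := by
  rw [At, notFragTrue_or hn,
    prob_union phi (Set.disjoint_union_right.mpr
      ⟨disjoint_prod_left (S := {b : Fin (2 ^ n) → Bool | ¬ Fragile n 1 b ∧ gameValue n b = true}) (S' := {b : Fin (2 ^ n) → Bool | gameValue n b = false}) (fun b hb => hb.2) (fun b hb => hb),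
       (disjoint_prod_right (T := {b : Fin (2 ^ n) → Bool | gameValue n b = true}) (T' := {b : Fin (2 ^ n) → Bool | gameValue n b = false}) (fun b hb => hb) (fun b hb => hb)).symm⟩),
    prob_union phi (disjoint_prod_left (S := {b : Fin (2 ^ n) → Bool | gameValue n b = true}) (S' := {b : Fin (2 ^ n) → Bool | gameValue n b = false}) (fun b hb => hb) (fun b hb => hb)).symm,
    prob_succ_prod, prob_succ_prod, prob_succ_prod]
  rfl

end Recursions

noncomputable def xseq : ℕ → ℝ
  | 0 => 0
  | k + 1 => phi ^ 3 + 2 * phi ^ 2 * (xseq k) ^ 2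

lemma odd_of_even (k : ℕ) (h1 : Pt (2*k) = phi) (h2 : Pf (2*k) = phi ^ 2)
    (h3 : At (2*k) = phi * xseq k) (h4 : Bf (2*k) = phi ^ 2 * (xseq k) ^ 2) :
    Pt (2*k+1) = phi ^ 2 ∧ Pf (2*k+1) = phi ∧ At (2*k+1) = phi ^ 2 * (xseq k) ^ 2
      ∧ Bf (2*k+1) = phi * xseq (k+1) := by
  have hn : (2*k + 1) % 2 = 1 := by omega
  refine ⟨?_, ?_, ?_, ?_⟩
  · rw [Pt_succ_and hn, h1]; ring
  · rw [Pf_succ_and hn, h1, h2]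
    linear_combination (phi ^ 2 + phi) * phi_sq
  · rw [At_succ_and hn, h3]; ring
  · rw [Bf_succ_and hn, h1, h2, h4]
    show _ = phi * (phi ^ 3 + 2 * phi ^ 2 * (xseq k) ^ 2)
    ring

lemma even_vals : ∀ k, Pt (2*k) = phi ∧ Pf (2*k) = phi ^ 2 ∧ At (2*k) = phi * xseq k
    ∧ Bf (2*k) = phi ^ 2 * (xseq k) ^ 2 := by
  intro k
  induction k with
  | zero =>
    refine ⟨Pt_zero, ?_, ?_, ?_⟩
    · rw [Pf_zero, phi_sq]
    · rw [At_zero]; show (0:ℝ) = phi * 0; ring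
    · rw [Bf_zero]; show (0:ℝ) = phi ^ 2 * 0 ^ 2; ring
  | succ k ih =>
    obtain ⟨h1, h2, h3, h4⟩ := ih
    obtain ⟨o1, o2, o3, o4⟩ := odd_of_even k h1 h2 h3 h4
    have he : 2 * (k+1) = (2*k+1) + 1 := by omega
    have hn : ¬ ((2*k+1) + 1) % 2 = 1 := by omega
    rw [he]
    refine ⟨?_, ?_, ?_, ?_⟩
    · rw [Pt_succ_or hn, o1, o2]
      linear_combination (phi ^ 2 + phi) * phi_sq
    · rw [Pf_succ_or hn, o2]; ring
    · rw [At_succ_or hn, o1, o2, o3]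
      show _ = phi * (phi ^ 3 + 2 * phi ^ 2 * (xseq k) ^ 2)
      ring
    · rw [Bf_succ_or hn, o4]
      ring

lemma odd_vals (k : ℕ) : Pt (2*k+1) = phi ^ 2 ∧ Pf (2*k+1) = phi
    ∧ At (2*k+1) = phi ^ 2 * (xseq k) ^ 2 ∧ Bf (2*k+1) = phi * xseq (k+1) := by
  obtain ⟨h1, h2, h3, h4⟩ := even_vals k
  exact odd_of_even k h1 h2 h3 h4

lemma xseq_mem : ∀ k, 0 ≤ xseq k ∧ xseq k ≤ phi / 2 := by
  intro k
  induction k with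
  | zero => exact ⟨le_refl 0, by have := phi_pos; show (0:ℝ) ≤ phi / 2; linarith⟩
  | succ k ih =>
    obtain ⟨h0, h1⟩ := ih
    have hp := phi_pos
    have hs := phi_sq
    have hfix : phi ^ 3 + phi ^ 4 / 2 = phi / 2 := by
      linear_combination (phi ^ 2 / 2 + phi / 2) * phi_sq
    constructor
    · show 0 ≤ phi ^ 3 + 2 * phi ^ 2 * (xseq k) ^ 2
      have h2 : (0:ℝ) ≤ 2 * phi ^ 2 * (xseq k) ^ 2 := by positivity
      nlinarith [pow_pos hp 3]
    · show phi ^ 3 + 2 * phi ^ 2 * (xseq k) ^ 2 ≤ phi / 2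
      have hx2 : xseq k ^ 2 ≤ (phi / 2) ^ 2 := by nlinarith
      nlinarith [hfix, mul_nonneg (sq_nonneg phi) (sub_nonneg.mpr hx2)]

lemma xseq_bound : ∀ k, phi / 2 - xseq k ≤ (phi / 2) * (2 * phi ^ 3) ^ k := by
  intro k
  induction k with
  | zero => simp [xseq]
  | succ k ih =>
    obtain ⟨h0, h1⟩ := xseq_mem k
    have hp := phi_pos
    have hs := phi_sq
    have hr : 0 ≤ 2 * phi ^ 3 := by nlinarith [pow_pos phi_pos 3]
    have hfix : phi ^ 3 + phi ^ 4 / 2 = phi / 2 := by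
      linear_combination (phi ^ 2 / 2 + phi / 2) * phi_sq
    have key : phi / 2 - xseq (k+1) ≤ (2 * phi ^ 3) * (phi / 2 - xseq k) := by
      show phi / 2 - (phi ^ 3 + 2 * phi ^ 2 * (xseq k) ^ 2) ≤ _
      nlinarith [hfix, mul_nonneg (sq_nonneg phi) (sq_nonneg (xseq k - phi / 2))]
    calc phi / 2 - xseq (k+1) ≤ (2 * phi ^ 3) * (phi / 2 - xseq k) := key
      _ ≤ (2 * phi ^ 3) * ((phi / 2) * (2 * phi ^ 3) ^ k) := by
          exact mul_le_mul_of_nonneg_left ih hr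
      _ = (phi / 2) * (2 * phi ^ 3) ^ (k+1) := by ring

lemma two_phi_cube_lt_one : 2 * phi ^ 3 < 1 := by
  have hs := phi_sq
  have hp := phi_pos
  nlinarith [sq_nonneg (2 * phi - 1)]

lemma xseq_tendsto : Filter.Tendsto xseq Filter.atTop (nhds (phi / 2)) := by
  have hr0 : 0 ≤ 2 * phi ^ 3 := by nlinarith [pow_pos phi_pos 3]
  have h1 : Filter.Tendsto (fun k => (phi / 2) * (2 * phi ^ 3) ^ k) Filter.atTop (nhds 0) := by
    have := (tendsto_pow_atTop_nhds_zero_of_lt_one hr0 two_phi_cube_lt_one).const_mul (phi / 2)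
    simpa using this
  have hlow : Filter.Tendsto (fun k => phi / 2 - (phi / 2) * (2 * phi ^ 3) ^ k)
      Filter.atTop (nhds (phi / 2)) := by
    have := (tendsto_const_nhds (x := phi / 2) (f := Filter.atTop (α := ℕ))).sub h1
    simpa using this
  refine tendsto_of_tendsto_of_tendsto_of_le_of_le hlow tendsto_const_nhds ?_ ?_
  · intro k
    have := xseq_bound k
    simp only
    linarith
  · intro k
    exact (xseq_mem k).2

lemma alpha_eq (n : ℕ) : alpha n 1 = At n / Pt n := rfl
lemma beta_eq (n : ℕ) : beta n 1 = Bf n / Pf n := rfl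


end Aux

/-- With `ξ` the unique root in `(0,1)` of `x = φ³ + 2φ²x²`, the conditional non-1-fragility
probabilities satisfy `α_{2n}(1) → ξ`, `α_{2n+1}(1) → ξ²`, `β_{2n+1}(1) → ξ` and
`β_{2n}(1) → ξ²` as `n → ∞`. -/
theorem one_fragility_conditional_limits :
    ∃ ξ : ℝ, ξ ∈ Set.Ioo (0 : ℝ) 1 ∧ ξ = phi ^ 3 + 2 * phi ^ 2 * ξ ^ 2 ∧
      (∀ y ∈ Set.Ioo (0 : ℝ) 1, y = phi ^ 3 + 2 * phi ^ 2 * y ^ 2 → y = ξ) ∧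
      Tendsto (fun n => alpha (2 * n) 1) atTop (𝓝 ξ) ∧
      Tendsto (fun n => alpha (2 * n + 1) 1) atTop (𝓝 (ξ ^ 2)) ∧
      Tendsto (fun n => beta (2 * n + 1) 1) atTop (𝓝 ξ) ∧
      Tendsto (fun n => beta (2 * n) 1) atTop (𝓝 (ξ ^ 2)) := by
  have hp := phi_pos
  have hs := phi_sq
  have hp2 : phi ^ 2 ≠ 0 := by positivity
  have hpne : phi ≠ 0 := ne_of_gt hp
  refine ⟨phi / 2, ⟨by linarith, by nlinarith [phi_lt]⟩, ?_, ?_, ?_, ?_, ?_, ?_⟩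
  · linear_combination (-phi ^ 2 / 2 - phi / 2) * phi_sq
  · rintro y ⟨hy0, hy1⟩ hy
    have hfac : (2 * phi ^ 2) * ((y - phi / 2) * (y - 1)) = 0 := by
      linear_combination (-1 : ℝ) * hy - y * (phi + 1) * phi_sq
    have h2 : (2 : ℝ) * phi ^ 2 ≠ 0 := by positivity
    rcases mul_eq_zero.mp hfac with h | h
    · exact absurd h h2
    · rcases mul_eq_zero.mp h with h | h
      · linarith [sub_eq_zero.mp h]
      · exact absurd (sub_eq_zero.mp h) (ne_of_lt hy1)
  · have he : ∀ n, alpha (2 * n) 1 = xseq n := by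
      intro n
      obtain ⟨h1, -, h3, -⟩ := even_vals n
      rw [alpha_eq, h1, h3, mul_div_assoc]
      field_simp
    exact Tendsto.congr (fun n => (he n).symm) xseq_tendsto
  · have he : ∀ n, alpha (2 * n + 1) 1 = (xseq n) ^ 2 := by
      intro n
      obtain ⟨h1, -, h3, -⟩ := odd_vals n
      rw [alpha_eq, h1, h3]
      field_simp
    refine Tendsto.congr (fun n => (he n).symm) ?_
    have := xseq_tendsto.pow 2
    simpa using this
  · have he : ∀ n, beta (2 * n + 1) 1 = xseq (n + 1) := by
      intro n
      obtain ⟨-, h2, -, h4⟩ := odd_vals n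
      rw [beta_eq, h2, h4]
      field_simp
    refine Tendsto.congr (fun n => (he n).symm) ?_
    exact xseq_tendsto.comp (tendsto_add_atTop_nat 1)
  · have he : ∀ n, beta (2 * n) 1 = (xseq n) ^ 2 := by
      intro n
      obtain ⟨-, h2, -, h4⟩ := even_vals n
      rw [beta_eq, h2, h4]
      field_simp
    refine Tendsto.congr (fun n => (he n).symm) ?_
    have := xseq_tendsto.pow 2
    simpa using this
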